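/- Let H be an order in a definite rational quaternion division algebra A, and let I be a nonzero left ideal of H. If γ ∈ I has minimal positive reduced norm among nonzero elements of I, and for every ρ ∈ A \ H there exist α, β ∈ H with 0 < N(αρ − β) < 1, then I = Hγ. -/

import Mathlib

/-!
Write `x = ρ γ` with `ρ = x γ⁻¹ ∈ A`. If `ρ ∉ H`, pick `α, β ∈ H` with `0 < N(αρ - β) < 1`;
then `(αρ - β) γ = α x - β γ` is a nonzero element of `I` of norm `N(αρ - β) N(γ) < N(γ)`,
contradicting the minimality of `γ`. Hence `ρ ∈ H` and `x ∈ Hγ`.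
-/

open Quaternion

/-- Reduced norm on the definite quaternion algebra `(−a,−b / ℚ)`. -/
def qN (a b : ℚ) (x : ℍ[ℚ, -a, -b]) : ℚ := (x * star x).re

/-- `H` is an order: finitely generated as an additive group, and a full lattice. -/
def IsOrder (a b : ℚ) (H : Subring ℍ[ℚ, -a, -b]) : Prop :=
  H.toAddSubgroup.FG ∧
    ∀ x : ℍ[ℚ, -a, -b], ∃ n : ℕ, 0 < n ∧ (n : ℍ[ℚ, -a, -b]) * x ∈ H

/-- `H` is a left principal ideal domain: every left ideal is principal. -/
def IsLeftPID (a b : ℚ) (H : Subring ℍ[ℚ, -a, -b]) : Prop :=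
  ∀ I : Set ℍ[ℚ, -a, -b],
    (I ⊆ H ∧ (0 : ℍ[ℚ, -a, -b]) ∈ I ∧ (∀ x ∈ I, ∀ y ∈ I, x + y ∈ I) ∧
      (∀ h ∈ H, ∀ x ∈ I, h * x ∈ I)) →
    ∃ γ ∈ H, I = {x | ∃ h ∈ H, x = h * γ}

section ReducedNorm

variable {a b : ℚ}

lemma qN_eq (x : ℍ[ℚ, -a, -b]) :
    qN a b x = x.re ^ 2 + a * x.imI ^ 2 + b * x.imJ ^ 2 + a * b * x.imK ^ 2 := by
  simp only [qN, QuaternionAlgebra.re_mul, QuaternionAlgebra.re_star, QuaternionAlgebra.imI_star,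
    QuaternionAlgebra.imJ_star, QuaternionAlgebra.imK_star]
  ring

@[simp]
lemma qN_zero : qN a b 0 = 0 := by
  simp [qN]

lemma qN_pos (ha : 0 < a) (hb : 0 < b) {x : ℍ[ℚ, -a, -b]} (hx : x ≠ 0) : 0 < qN a b x := by
  rw [qN_eq]
  by_contra! h
  have hre : 0 ≤ x.re ^ 2 := by positivity
  have hI : 0 ≤ a * x.imI ^ 2 := by positivity
  have hJ : 0 ≤ b * x.imJ ^ 2 := by positivity
  have hK : 0 ≤ a * b * x.imK ^ 2 := by positivity
  refine hx (QuaternionAlgebra.ext ?_ ?_ ?_ ?_)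
  · simpa using (by linarith : x.re ^ 2 = 0)
  · simpa [ha.ne'] using (by linarith : a * x.imI ^ 2 = 0)
  · simpa [hb.ne'] using (by linarith : b * x.imJ ^ 2 = 0)
  · simpa [ha.ne', hb.ne'] using (by linarith : a * b * x.imK ^ 2 = 0)

lemma mul_star_eq_qN (x : ℍ[ℚ, -a, -b]) : x * star x = (qN a b x : ℍ[ℚ, -a, -b]) :=
  x.mul_star_eq_coe

lemma star_mul_eq_qN (x : ℍ[ℚ, -a, -b]) : star x * x = (qN a b x : ℍ[ℚ, -a, -b]) := by
  rw [star_comm_self', mul_star_eq_qN]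

lemma qN_mul (x y : ℍ[ℚ, -a, -b]) : qN a b (x * y) = qN a b x * qN a b y := by
  have h : x * y * star (x * y) = ((qN a b x * qN a b y : ℚ) : ℍ[ℚ, -a, -b]) := by
    rw [star_mul, mul_assoc, ← mul_assoc y, mul_star_eq_qN, QuaternionAlgebra.coe_commutes,
      ← mul_assoc, mul_star_eq_qN, ← QuaternionAlgebra.coe_mul, mul_comm]
  rw [qN, h, QuaternionAlgebra.re_coe]

lemma mul_smul_star_mul_cancel {x : ℍ[ℚ, -a, -b]} (hx : qN a b x ≠ 0) (y : ℍ[ℚ, -a, -b]) :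
    y * ((qN a b x)⁻¹ • star x) * x = y := by
  rw [mul_assoc, smul_mul_assoc, star_mul_eq_qN, QuaternionAlgebra.smul_coe, inv_mul_cancel₀ hx,
    QuaternionAlgebra.coe_one, mul_one]

end ReducedNorm

lemma mem_of_mul_mem_of_qN_minimal {a b : ℚ} {H : Subring ℍ[ℚ, -a, -b]} {I : Set ℍ[ℚ, -a, -b]}
    (hadd : ∀ x ∈ I, ∀ y ∈ I, x + y ∈ I) (hmul : ∀ h ∈ H, ∀ x ∈ I, h * x ∈ I)
    {γ : ℍ[ℚ, -a, -b]} (hγI : γ ∈ I) (hγ : 0 < qN a b γ)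
    (hmin : ∀ x ∈ I, x ≠ 0 → qN a b γ ≤ qN a b x) {ρ : ℍ[ℚ, -a, -b]} (hρI : ρ * γ ∈ I)
    (hDH : ρ ∉ H → ∃ α ∈ H, ∃ β ∈ H, 0 < qN a b (α * ρ - β) ∧ qN a b (α * ρ - β) < 1) :
    ρ ∈ H := by
  by_contra hρH
  obtain ⟨α, hα, β, hβ, hpos, hlt⟩ := hDH hρH
  have hyI : (α * ρ - β) * γ ∈ I := by
    rw [sub_mul, mul_assoc, sub_eq_add_neg, ← neg_mul]
    exact hadd _ (hmul α hα _ hρI) _ (hmul (-β) (H.neg_mem hβ) γ hγI)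
  have hyN : qN a b ((α * ρ - β) * γ) = qN a b (α * ρ - β) * qN a b γ := qN_mul _ _
  have hy0 : (α * ρ - β) * γ ≠ 0 := by
    intro h
    rw [h, qN_zero] at hyN
    exact (mul_pos hpos hγ).ne hyN
  have hlt_γ : qN a b ((α * ρ - β) * γ) < qN a b γ := hyN ▸ mul_lt_of_lt_one_left hγ hlt
  exact (hmin _ hyI hy0).not_gt hlt_γ

theorem stmt_3_general (a b : ℚ) (ha : 0 < a) (hb : 0 < b)
    (H : Subring ℍ[ℚ, -a, -b])
    (I : Set ℍ[ℚ, -a, -b])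
    (hI : I ⊆ H ∧ (0 : ℍ[ℚ, -a, -b]) ∈ I ∧ (∀ x ∈ I, ∀ y ∈ I, x + y ∈ I) ∧
      (∀ h ∈ H, ∀ x ∈ I, h * x ∈ I))
    (γ : ℍ[ℚ, -a, -b]) (hγI : γ ∈ I) (hγ0 : γ ≠ 0)
    (hmin : ∀ x ∈ I, x ≠ 0 → qN a b γ ≤ qN a b x)
    (hDH : ∀ ρ : ℍ[ℚ, -a, -b], ρ ∉ H →
      ∃ α ∈ H, ∃ β ∈ H, 0 < qN a b (α * ρ - β) ∧ qN a b (α * ρ - β) < 1) :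
    I = {x | ∃ h ∈ H, x = h * γ} := by
  obtain ⟨-, -, hadd, hmul⟩ := hI
  have hγ : 0 < qN a b γ := qN_pos ha hb hγ0
  ext x
  constructor
  · intro hxI
    have hx : x * ((qN a b γ)⁻¹ • star γ) * γ = x := mul_smul_star_mul_cancel hγ.ne' x
    refine ⟨_, mem_of_mul_mem_of_qN_minimal hadd hmul hγI hγ hmin (by rwa [hx]) (hDH _), hx.symm⟩
  · rintro ⟨h, hh, rfl⟩
    exact hmul h hh γ hγI

theorem stmt_3 (a b : ℚ) (ha : 0 < a) (hb : 0 < b)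
    (H : Subring ℍ[ℚ, -a, -b]) (hH : IsOrder a b H)
    (I : Set ℍ[ℚ, -a, -b])
    (hI : I ⊆ H ∧ (0 : ℍ[ℚ, -a, -b]) ∈ I ∧ (∀ x ∈ I, ∀ y ∈ I, x + y ∈ I) ∧
      (∀ h ∈ H, ∀ x ∈ I, h * x ∈ I))
    (hne : ∃ x ∈ I, x ≠ 0)
    (γ : ℍ[ℚ, -a, -b]) (hγI : γ ∈ I) (hγ0 : γ ≠ 0)
    (hmin : ∀ x ∈ I, x ≠ 0 → qN a b γ ≤ qN a b x)
    (hDH : ∀ ρ : ℍ[ℚ, -a, -b], ρ ∉ H →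
      ∃ α ∈ H, ∃ β ∈ H, 0 < qN a b (α * ρ - β) ∧ qN a b (α * ρ - β) < 1) :
    I = {x | ∃ h ∈ H, x = h * γ} :=
  stmt_3_general a b ha hb H I hI γ hγI hγ0 hmin hDH
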